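/- arXiv:1804.02511 — 2 statements merged into one kernel-verified Lean document; each statement's English description precedes it below -/
import Mathlib

section
/- The affine index polynomial is additive under connected sum: if K # L denotes a connected sum of virtual knot diagrams K and L (obtained by removing an arc from each diagram and joining them), then P_{K # L}(t) = P_K(t) + P_L(t); in particular, for any virtual knot diagram K, P_{K # K^!}(t) = P_K(t) - P_K(t) = 0, where K^! is the vertical mirror image of K. -/
/-!
# Virtual knots and links via signed Gauss codes

A virtual knot or link diagram, up to the virtual Reidemeister moves and the
detour move, is faithfully encoded by its signed oriented Gauss code: the
cyclic sequence, along each component, of passages through the classical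
crossings, each passage recording the crossing's name, whether the strand
passes over or under, and the crossing sign.  Virtual crossings and the
detour move are invisible in this encoding, so oriented virtual isotopy is
generated by the oriented classical Reidemeister moves together with
re-encoding moves (rotation of the base point, permutation of the components,
renaming of the crossings).
-/

open LaurentPolynomial

/-- A passage of a strand through a classical crossing of a virtual diagram. -/
structure Passage where
  id : ℕ
  isOver : Bool
  sign : ℤ
  deriving DecidableEq, Repr

instance : Inhabited Passage := ⟨⟨0, false, 0⟩⟩

/-- The affine-label increment when the strand passes through a crossing:
crossing to the left increases the label by one, crossing to the right
decreases it by one.  For a positive crossing the over-strand crosses to the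
right and the under-strand to the left; for a negative crossing it is the
other way around.  Labels are unchanged at virtual crossings. -/
def Passage.inc (p : Passage) : ℤ := if p.isOver then -p.sign else p.sign

/-- The Gauss code of one oriented circle component. -/
abbrev KCode := List Passage

/-- The list of classical crossing names appearing in a code. -/
def crossIds (a : KCode) : List ℕ := (a.map Passage.id).dedup

/-- The number of classical crossings. -/
def numCross (a : KCode) : ℕ := (crossIds a).length

/-- A valid knot code: every crossing has sign `±1` and occurs exactly once as
an over-passage and exactly once as an under-passage, with consistent sign. -/
def ValidK (a : KCode) : Prop :=
  ∀ p ∈ a, (p.sign = 1 ∨ p.sign = -1) ∧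
    (a.filter (fun q => q.id == p.id && q.isOver)).length = 1 ∧
    (a.filter (fun q => q.id == p.id && !q.isOver)).length = 1 ∧
    (∀ q ∈ a, q.id = p.id → q.sign = p.sign)

/-- The canonical affine label of the arc entering the `k`-th passage
(base label `0` on the arc entering the `0`-th passage). -/
def labelAt (a : KCode) (k : ℕ) : ℤ := ((a.take k).map Passage.inc).sum

/-- Position of the over-passage of crossing `i`. -/
def overPos (a : KCode) (i : ℕ) : ℕ := a.findIdx (fun p => p.id == i && p.isOver)

/-- Position of the under-passage of crossing `i`. -/
def underPos (a : KCode) (i : ℕ) : ℕ := a.findIdx (fun p => p.id == i && !p.isOver)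

/-- The sign of crossing `i`. -/
def sgn (a : KCode) (i : ℕ) : ℤ :=
  ((a.find? (fun p => p.id == i)).map Passage.sign).getD 0

/-- The weight `W_K(c)` of a crossing `c`: with incoming labels `a` (left) and
`b` (right) it is `W₊ = a - b - 1` if `sgn c = 1` and `W₋ = b - a + 1` if
`sgn c = -1`; equivalently it is
(label entering the over-passage) − (label entering the under-passage) − sign. -/
def wt (a : KCode) (i : ℕ) : ℤ :=
  labelAt a (overPos a i) - labelAt a (underPos a i) - sgn a i

/-- The affine index polynomial `P_K(t) = ∑_c sgn(c) (t^{W_K(c)} - 1)`. -/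
noncomputable def affP (a : KCode) : LaurentPolynomial ℤ :=
  ((crossIds a).map (fun i => (C (sgn a i)) * (T (wt a i) - 1))).sum

/-- The signed crossing count `wr_n(K) = ∑_{c : W_K(c) = n} sgn(c)`. -/
def wrn (a : KCode) (n : ℤ) : ℤ :=
  (((crossIds a).filter (fun i => wt a i == n)).map (sgn a)).sum

/-- A crossing is odd when it flanks an odd number of symbols of the Gauss
code, i.e. when the positions of its two passages differ by an even number. -/
def OddCross (a : KCode) (i : ℕ) : Bool := (overPos a i + underPos a i) % 2 == 0

/-- The odd writhe `J(K)`: the sum of the signs of the odd crossings. -/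
def oddWrithe (a : KCode) : ℤ := (((crossIds a).filter (OddCross a)).map (sgn a)).sum

/-- The reverse `K̄` of `K`: the same diagram with reversed orientation. -/
def reverseK (a : KCode) : KCode := a.reverse

/-- The (flat) mirror image `K*`: every classical crossing is switched, which
exchanges over- and under-passages and reverses all crossing signs. -/
def switchAll (a : KCode) : KCode := a.map (fun p => ⟨p.id, !p.isOver, -p.sign⟩)

/-- The vertical mirror image `K^!`: reflect the diagram in a plane
perpendicular to the plane of the diagram (which keeps the over/under data
and reverses all crossing signs) and reverse the orientation. -/
def vmirror (a : KCode) : KCode := (a.map (fun p => ⟨p.id, p.isOver, -p.sign⟩)).reverse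

/-- Rename the crossings of a code by `f`. -/
def relabel (f : ℕ → ℕ) (a : KCode) : KCode := a.map (fun p => { p with id := f p.id })

/-! ## Links -/

/-- A link code: a list of circle components. -/
abbrev LCode := List KCode

/-- Validity of a link code: the crossing data is globally consistent. -/
def ValidLink (L : LCode) : Prop := ValidK L.flatten

def crossIdsL (L : LCode) : List ℕ := crossIds L.flatten

def sgnL (L : LCode) (i : ℕ) : ℤ := sgn L.flatten i

/-- An affine (integer) labeling of the arcs of a link diagram:
`lab c k` is the label of the arc entering the `k`-th passage of the `c`-th
component; at each classical crossing with left incoming label `a` and right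
incoming label `b`, the left outgoing label is `b+1` and the right outgoing
label is `a-1`, i.e. passing through a passage changes the label by its
increment.  Labels are unchanged at virtual crossings. -/
def IsAffineLabeling (L : LCode) (lab : ℕ → ℕ → ℤ) : Prop :=
  ∀ c, c < L.length → ∀ k, k < (L.getD c []).length →
    lab c ((k + 1) % (L.getD c []).length) =
      lab c k + ((L.getD c []).getD k default).inc

/-- Locations `(component, position)` of the passages of crossing `i` that are
over-passages (`sel = true`) resp. under-passages (`sel = false`). -/
def locs (L : LCode) (i : ℕ) (sel : Bool) : List (ℕ × ℕ) :=
  (List.range L.length).flatMap (fun c =>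
    (List.range (L.getD c []).length).filterMap (fun k =>
      if ((L.getD c []).getD k default).id = i ∧ ((L.getD c []).getD k default).isOver = sel
      then some (c, k) else none))

/-- The weight of crossing `i` of a link diagram with affine labeling `lab`. -/
def wtL (L : LCode) (lab : ℕ → ℕ → ℤ) (i : ℕ) : ℤ :=
  lab ((locs L i true).headD (0, 0)).1 ((locs L i true).headD (0, 0)).2
    - lab ((locs L i false).headD (0, 0)).1 ((locs L i false).headD (0, 0)).2
    - sgnL L i

/-- The affine index polynomial of an affinely labeled link diagram. -/
noncomputable def affPL (L : LCode) (lab : ℕ → ℕ → ℤ) : LaurentPolynomial ℤ :=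
  ((crossIdsL L).map (fun i => (C (sgnL L i)) * (T (wtL L lab i) - 1))).sum

/-- The passages of component `c` whose partner passage lies on a different
component. -/
def crossPassages (L : LCode) (c : ℕ) : KCode :=
  (L.getD c []).filter (fun p =>
    ((L.getD c []).filter (fun q => q.id == p.id)).length == 1)

/-- The algebraic intersection number of component `c` with the union of the
other components: the signed count, in the plane, of the crossings of
component `c` with the other components (the strand crossing to the left
counts `+1`, to the right `−1`). -/
def algInt (L : LCode) (c : ℕ) : ℤ := ((crossPassages L c).map Passage.inc).sum

/-- A multi-component diagram is compatible when every component has algebraic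
intersection number zero with the union of the other components. -/
def Compatible (L : LCode) : Prop := ∀ c < L.length, algInt L c = 0

/-! ## Virtual isotopy

Link codes whose components carry an inert tracking label (a natural number);
the labels are preserved by isotopy and are used to follow components through
the births, deaths and saddles of a cobordism. -/

abbrev LLC := List (ℕ × KCode)

def plainL (L : LLC) : LCode := L.map Prod.snd

def idsOf (L : LLC) : List ℕ := crossIdsL (plainL L)

def pieceIds (L : LLC) : List ℕ := L.map Prod.fst

/-- `ReplC c c' segs segs'`: the circle `c'` is obtained from the circle `c`
by replacing, scanning from left to right, an initial batch of the listed
segments (`u` is replaced by `v` for each pair `(u, v)`), leaving `segs'`. -/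
inductive ReplC : KCode → KCode → List (KCode × KCode) → List (KCode × KCode) → Prop
  | nil (c : KCode) (segs : List (KCode × KCode)) : ReplC c c segs segs
  | cons {y y' : KCode} {segs segs' : List (KCode × KCode)} (x u v : KCode) :
      ReplC y y' segs segs' →
      ReplC (x ++ u ++ y) (x ++ v ++ y') ((u, v) :: segs) segs'

/-- `ReplL L L' segs`: the labeled link `L'` is obtained from `L` by
simultaneously performing all the listed segment replacements, in scanning
order. -/
inductive ReplL : LLC → LLC → List (KCode × KCode) → Prop
  | nil : ReplL [] [] []
  | cons {c c' : KCode} {L L' : LLC} {segs segs' : List (KCode × KCode)} (k : ℕ) :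
      ReplC c c' segs segs' → ReplL L L' segs' → ReplL ((k, c) :: L) ((k, c') :: L') segs

/-- `if b then [p, q] else [q, p]`. -/
def pairOf (b : Bool) (p q : Passage) : KCode := if b then [p, q] else [q, p]

/-- A generating move of oriented virtual isotopy on Gauss codes.  The
constructors `perm`, `rotate`, `rename` are inessential re-encodings; in
particular the virtual Reidemeister moves and the detour move leave the Gauss
code unchanged.  The constructors `r1`, `r2`, `r3` are the oriented classical
Reidemeister moves (`r1` and `r2` are stated as insertions; the inverse moves
are recovered by taking the symmetric closure). -/
inductive MoveStep : LLC → LLC → Prop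
  /-- re-ordering the components -/
  | perm {L L' : LLC} (h : L.Perm L') : MoveStep L L'
  /-- moving the base point of a component -/
  | rotate (k : ℕ) (x y : KCode) (L : LLC) :
      MoveStep ((k, x ++ y) :: L) ((k, y ++ x) :: L)
  /-- renaming the crossings injectively -/
  | rename {L : LLC} (f : ℕ → ℕ) (hf : Function.Injective f) :
      MoveStep L (L.map (fun c => (c.1, relabel f c.2)))
  /-- first Reidemeister move: insertion of a kink with a fresh crossing `i` -/
  | r1 {L L' : LLC} (i : ℕ) (o : Bool) (s : ℤ) (hs : s = 1 ∨ s = -1) (hi : i ∉ idsOf L)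
      (h : ReplL L L' [([], [⟨i, o, s⟩, ⟨i, !o, s⟩])]) : MoveStep L L'
  /-- second Reidemeister move: one strand slides across another, creating two
  fresh crossings `i, j` with opposite signs; `o` records whether the first
  strand passes over, `ord` the relative orientation of the strands. -/
  | r2 {L L' : LLC} (i j : ℕ) (o ord : Bool) (s : ℤ) (hs : s = 1 ∨ s = -1)
      (hij : i ≠ j) (hi : i ∉ idsOf L) (hj : j ∉ idsOf L)
      (h : ReplL L L'
        [([], [⟨i, o, s⟩, ⟨j, o, -s⟩]),
         ([], if ord then [⟨j, !o, -s⟩, ⟨i, !o, s⟩] else [⟨i, !o, s⟩, ⟨j, !o, -s⟩])]) :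
      MoveStep L L'
  /-- third Reidemeister move: a strand slides across a crossing.  Crossing
  `i` joins the top and the middle strand, `j` the top and the bottom strand,
  `k` the middle and the bottom strand; on each of the three strands the
  corresponding pair of adjacent passages is transposed.  The product of the
  three signs is `+1`, and the orders of the pairs along the strands are
  correlated with the signs as dictated by the orientations of the three
  strands (`t` records the order along the top strand). -/
  | r3 {L L' : LLC} (i j k : ℕ) (si sj sk : ℤ)
      (hsi : si = 1 ∨ si = -1) (hsj : sj = 1 ∨ sj = -1) (hsk : sk = 1 ∨ sk = -1)
      (hprod : si * sj * sk = 1)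
      (hij : i ≠ j) (hik : i ≠ k) (hjk : j ≠ k)
      (t : Bool) (segs : List (KCode × KCode))
      (hsegs : segs.Perm
        [(pairOf t ⟨i, true, si⟩ ⟨j, true, sj⟩,
          pairOf (!t) ⟨i, true, si⟩ ⟨j, true, sj⟩),
         (pairOf (t == (sj * sk == 1)) ⟨i, false, si⟩ ⟨k, true, sk⟩,
          pairOf (!(t == (sj * sk == 1))) ⟨i, false, si⟩ ⟨k, true, sk⟩),
         (pairOf (t == (si * sk == 1)) ⟨j, false, sj⟩ ⟨k, false, sk⟩,
          pairOf (!(t == (si * sk == 1))) ⟨j, false, sj⟩ ⟨k, false, sk⟩)])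
      (h : ReplL L L' segs) : MoveStep L L'

/-- Oriented virtual isotopy: the equivalence relation generated by the
classical Reidemeister moves, the virtual Reidemeister moves and the detour
move (the latter two being invisible on Gauss codes). -/
def Isotopic : LLC → LLC → Prop := Relation.EqvGen MoveStep

/-! ## Cobordism

A cobordism is a sequence of isotopies, births and deaths of unknotted
circles, and oriented saddle moves.  The schema of a cobordism is the abstract
surface it generates; we track its connected pieces through the component
labels, the genus of each piece, and the total genus of the pieces that have
been closed off, so that the genus of the schema is well defined. -/

/-- A state of a cobordism in progress: the current labeled link diagram (the
label of a circle names the surface piece it bounds), the genus of each piece,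
and the accumulated genus of closed-off pieces. -/
structure CobState where
  link : LLC
  genus : ℕ → ℕ
  closed : ℕ

/-- One step of a virtual cobordism. -/
inductive CobStep : CobState → CobState → Prop
  /-- a virtual isotopy move -/
  | isot {L L' : LLC} (g : ℕ → ℕ) (c : ℕ) (h : MoveStep L L') :
      CobStep ⟨L, g, c⟩ ⟨L', g, c⟩
  /-- birth of an unknotted circle, starting a fresh piece of genus `0` -/
  | birth (k : ℕ) (L : LLC) (g : ℕ → ℕ) (c : ℕ) (hk : k ∉ pieceIds L) :
      CobStep ⟨L, g, c⟩ ⟨(k, []) :: L, Function.update g k 0, c⟩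
  /-- death of an unknotted circle whose piece still has other boundary -/
  | death_keep (k : ℕ) (L : LLC) (g : ℕ → ℕ) (c : ℕ) (hk : k ∈ pieceIds L) :
      CobStep ⟨(k, []) :: L, g, c⟩ ⟨L, g, c⟩
  /-- death of an unknotted circle closing off its piece -/
  | death_close (k : ℕ) (L : LLC) (g : ℕ → ℕ) (c : ℕ) (hk : k ∉ pieceIds L) :
      CobStep ⟨(k, []) :: L, g, c⟩ ⟨L, g, c + g k⟩
  /-- oriented saddle splitting one circle into two (genus unchanged) -/
  | saddle_split (k : ℕ) (x y : KCode) (L : LLC) (g : ℕ → ℕ) (c : ℕ) :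
      CobStep ⟨(k, x ++ y) :: L, g, c⟩ ⟨(k, x) :: (k, y) :: L, g, c⟩
  /-- oriented saddle merging two boundary circles of the same piece
  (the genus of the piece increases by one) -/
  | saddle_merge_same (k : ℕ) (x y : KCode) (L : LLC) (g : ℕ → ℕ) (c : ℕ) :
      CobStep ⟨(k, x) :: (k, y) :: L, g, c⟩
        ⟨(k, x ++ y) :: L, Function.update g k (g k + 1), c⟩
  /-- oriented saddle merging boundary circles of two different pieces
  (the pieces merge and their genera add) -/
  | saddle_merge_diff (j k : ℕ) (x y : KCode) (L : LLC) (g : ℕ → ℕ) (c : ℕ)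
      (hjk : j ≠ k) :
      CobStep ⟨(j, x) :: (k, y) :: L, g, c⟩
        ⟨(j, x ++ y) :: (L.map fun p => if p.1 = k then (j, p.2) else p),
          Function.update (Function.update g j (g j + g k)) k 0, c⟩

/-- A virtual cobordism: a finite sequence of cobordism steps. -/
def Cob : CobState → CobState → Prop := Relation.ReflTransGen CobStep

/-- `L` and `L'` cobound a virtual cobordism (of some genus). -/
def Cobordant (L L' : LLC) : Prop :=
  ∃ g' c', Cob ⟨L, fun _ => 0, 0⟩ ⟨L', g', c'⟩

/-- The knot `a` bounds a virtual surface schema of genus `G`: there is a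
virtual cobordism from `a` to the empty link, and `G` is the total genus of
the pieces of its schema. -/
def BoundsGenus (a : KCode) (G : ℕ) : Prop :=
  ∃ g' : ℕ → ℕ, Cob ⟨[(0, a)], fun _ => 0, 0⟩ ⟨[], g', G⟩

/-! ## Concordance

A genus-zero cobordism (concordance) is one in which every critical point is
paired: each birth is paired with a canceling saddle and each death with a
canceling saddle.  An elementary concordance is a birth followed (after
isotopy) by a saddle amalgamating the born circle, or a saddle splitting off a
circle that (after isotopy) dies. -/

/-- One step of a concordance. -/
inductive ConcStep : LLC → LLC → Prop
  /-- a virtual isotopy -/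
  | isot {L L' : LLC} (h : Isotopic L L') : ConcStep L L'
  /-- elementary concordance: birth of an unknotted circle (tracked by the
  fresh label `k`), isotopy, then an oriented saddle amalgamating the born
  circle with another component -/
  | birth_saddle {L rest : LLC} (j k : ℕ) (x y : KCode)
      (hk : k ∉ pieceIds L)
      (h : Isotopic ((k, []) :: L) ((j, x) :: (k, y) :: rest)) :
      ConcStep L ((j, x ++ y) :: rest)
  /-- elementary concordance: an oriented saddle splitting off a circle
  (tracked by the fresh label `k`) which after isotopy is an unknotted,
  unlinked circle and dies -/
  | saddle_death {M rest : LLC} (j k : ℕ) (x y : KCode)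
      (hk : k ∉ pieceIds ((j, x ++ y) :: M))
      (h : Isotopic ((j, x) :: (k, y) :: M) ((k, []) :: rest)) :
      ConcStep ((j, x ++ y) :: M) rest

/-- Virtual concordance: genus-zero virtual cobordism. -/
def Concordant : LLC → LLC → Prop := Relation.EqvGen ConcStep

/-- Virtual concordance of knots. -/
def ConcordantK (a b : KCode) : Prop := Concordant [(0, a)] [(0, b)]

/-- The unknot: a circle with no classical crossings. -/
def unknotCode : KCode := []

/-- A virtual knot is (virtually) slice when it is virtually concordant to
the unknot. -/
def SliceK (a : KCode) : Prop := ConcordantK a unknotCode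

/-! ## Seifert circles and faces -/

/-- The position of the other passage of the crossing visited at position `k`. -/
def partnerIdx (a : KCode) (k : ℕ) : ℕ :=
  ((List.range a.length).filter
    (fun j => j != k && (a.getD j default).id == (a.getD k default).id)).headD 0

/-- Traversal of the diagram obtained by the oriented smoothing of every
classical crossing: from the arc entering passage `k+1` one exits along the
arc leaving the partner passage. -/
def seifNext (a : KCode) (k : ℕ) : ℕ := partnerIdx a ((k + 1) % a.length)

/-- A canonical representative of the Seifert circle through arc `k`. -/
def seifRep (a : KCode) (k : ℕ) : ℕ :=
  ((List.range a.length).map (fun t => (seifNext a)^[t] k)).foldr min k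

/-- The number of (virtual) Seifert circles: the number of cycles of the
oriented smoothing of all classical crossings.  A crossingless circle is a
single Seifert circle. -/
def seifertCount (a : KCode) : ℕ :=
  if a.length = 0 then 1 else ((List.range a.length).map (seifRep a)).dedup.length

/-- The counterclockwise-next edge-end around a crossing.  An edge-end is a
pair (position, isIn): the head (`isIn = true`) or the tail (`isIn = false`)
of an arc at the passage at that position. -/
def nextEnd (a : KCode) (e : ℕ × Bool) : ℕ × Bool :=
  let p := a.getD e.1 default
  (partnerIdx a e.1, if p.isOver == (p.sign == 1) then e.2 else !e.2)

/-- The edge-end at which a directed arc (a dart) arrives. -/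
def headEnd (a : KCode) (d : ℕ × Bool) : ℕ × Bool :=
  if d.2 then ((d.1 + 1) % a.length, true) else (d.1, false)

/-- The dart leaving along a given edge-end. -/
def dartFrom (a : KCode) (e : ℕ × Bool) : ℕ × Bool :=
  if e.2 then ((e.1 + a.length - 1) % a.length, false) else (e.1, true)

/-- The face-tracing successor of a dart. -/
def faceNext (a : KCode) (d : ℕ × Bool) : ℕ × Bool :=
  dartFrom a (nextEnd a (headEnd a d))

def encDart (d : ℕ × Bool) : ℕ := 2 * d.1 + (if d.2 then 1 else 0)

/-- A canonical representative of the face through a given dart. -/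
def faceRep (a : KCode) (d : ℕ × Bool) : ℕ :=
  ((List.range (2 * a.length)).map (fun t => encDart ((faceNext a)^[t] d))).foldr
    min (encDart d)

/-- The number of faces of the abstract (ribbon) diagram of a code. -/
def numFaces (a : KCode) : ℕ :=
  (((List.range a.length).flatMap (fun k => [(k, true), (k, false)])).map
    (faceRep a)).dedup.length

/-- A knot code is classical when its underlying abstract diagram is planar,
i.e. (by Euler's formula) when it has `n + 2` faces, `n` being the number of
crossings.  Classical knot diagrams are exactly the virtual knot diagrams
having a realization with no virtual crossings. -/
def IsClassical (a : KCode) : Prop := a = [] ∨ numFaces a = numCross a + 2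

/-! ## Flat diagrams -/

/-- A passage of a flat (no over/under information) virtual knot diagram:
`left = true` when the other strand crosses to the left, so that the affine
label increases by one. -/
structure FlatPassage where
  id : ℕ
  left : Bool
  deriving DecidableEq, Repr

instance : Inhabited FlatPassage := ⟨⟨0, false⟩⟩

/-- The label increment at a flat passage. -/
def FlatPassage.inc (p : FlatPassage) : ℤ := if p.left then 1 else -1

/-- A valid flat knot code: each crossing is traversed exactly twice, once
with increment `+1` and once with increment `-1`. -/
def ValidFlat (a : List FlatPassage) : Prop :=
  ∀ p ∈ a, (a.filter (fun q => q.id == p.id && q.left)).length = 1 ∧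
    (a.filter (fun q => q.id == p.id && !q.left)).length = 1

/-- An affine labeling of a flat knot diagram: `lab k` is the label of the arc
entering the `k`-th passage, and passing a crossing changes the label by the
increment of the passage. -/
def IsFlatLabeling (a : List FlatPassage) (lab : ℕ → ℤ) : Prop :=
  ∀ k, k < a.length → lab ((k + 1) % a.length) = lab k + (a.getD k default).inc

/-!
Weights are differences of affine labels, so they are blind to a global shift of the labelling.
In `a ++ b` the passages of `a` keep their positions and labels, while those of `b` are all moved
by `a.length` and all their labels shifted by the label accumulated along `a`; hence every
crossing keeps its sign and its weight, and the sums add up.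

Reading the code backwards sends the passage at position `k` to position `n - 1 - k`, and the
label entering it becomes, up to a global shift, minus the label leaving the original passage.
An over-passage changes the label by `-sgn`, an under-passage by `+sgn`, so after the sign flip of
the vertical mirror every weight is unchanged while every sign is negated: `P_{K^!} = -P_K`.
Renaming the crossings injectively changes nothing.
-/

theorem List.findIdx_reverse_of_length_filter_eq_one {α : Type*} {p : α → Bool} :
    ∀ {l : List α}, (l.filter p).length = 1 → l.reverse.findIdx p = l.length - 1 - l.findIdx p
  | [], h => by simp at h
  | x :: l, h => by
    rw [List.reverse_cons, List.findIdx_append]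
    by_cases hx : p x
    · rw [List.filter_cons_of_pos hx, List.length_cons, Nat.add_eq_right,
        List.length_eq_zero_iff, List.filter_eq_nil_iff] at h
      rw [List.findIdx_eq_length_of_false (by simpa using h)]
      simp [List.findIdx_cons, hx]
    · rw [List.filter_cons_of_neg hx] at h
      have hlt : l.findIdx p < l.length := by
        obtain ⟨y, hy⟩ := List.exists_mem_of_length_pos (h ▸ Nat.one_pos)
        exact List.findIdx_lt_length_of_exists ⟨y, List.mem_filter.mp hy⟩
      rw [List.findIdx_reverse_of_length_filter_eq_one h, if_pos (by simp; omega)]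
      simp [List.findIdx_cons, hx]
      omega

def passagePos (a : KCode) (i : ℕ) (o : Bool) : ℕ :=
  a.findIdx (fun p => p.id == i && p.isOver == o)

lemma wt_eq_passagePos (a : KCode) (i : ℕ) :
    wt a i = labelAt a (passagePos a i true) - labelAt a (passagePos a i false) - sgn a i := by
  simp [wt, overPos, underPos, passagePos]

lemma mem_crossIds {a : KCode} {i : ℕ} : i ∈ crossIds a ↔ ∃ p ∈ a, p.id = i := by
  simp [crossIds]

lemma sgn_eq_of_forall_mem {a : KCode} {i : ℕ} {s : ℤ} (hi : i ∈ crossIds a)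
    (h : ∀ p ∈ a, p.id = i → p.sign = s) : sgn a i = s := by
  obtain ⟨p, hp, rfl⟩ := mem_crossIds.mp hi
  obtain ⟨q, hq⟩ := Option.isSome_iff_exists.mp <|
    (List.find?_isSome (p := fun q => q.id == p.id)).mpr ⟨p, hp, beq_self_eq_true p.id⟩
  simp only [sgn, hq, Option.map_some, Option.getD_some]
  exact h q (List.mem_of_find?_eq_some hq) (by simpa using List.find?_some hq)

namespace ValidK

variable {a : KCode} (ha : ValidK a) {i : ℕ}
include ha

lemma sgn_eq {p : Passage} (hp : p ∈ a) : sgn a p.id = p.sign :=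
  sgn_eq_of_forall_mem (mem_crossIds.mpr ⟨p, hp, rfl⟩) fun q hq hqi => (ha p hp).2.2.2 q hq hqi

lemma length_filter_passage (hi : i ∈ crossIds a) (o : Bool) :
    (a.filter (fun p => p.id == i && p.isOver == o)).length = 1 := by
  obtain ⟨p, hp, rfl⟩ := mem_crossIds.mp hi
  cases o
  · simpa using (ha p hp).2.2.1
  · simpa using (ha p hp).2.1

lemma passagePos_lt (hi : i ∈ crossIds a) (o : Bool) : passagePos a i o < a.length := by
  obtain ⟨p, hp⟩ := List.exists_mem_of_length_pos (ha.length_filter_passage hi o ▸ Nat.one_pos)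
  exact List.findIdx_lt_length_of_exists ⟨p, List.mem_filter.mp hp⟩

lemma inc_getElem_passagePos (hi : i ∈ crossIds a) (o : Bool) :
    (a[passagePos a i o]'(ha.passagePos_lt hi o)).inc = if o then -sgn a i else sgn a i := by
  have hp : (a[passagePos a i o]'(ha.passagePos_lt hi o)).id = i ∧
      (a[passagePos a i o]'(ha.passagePos_lt hi o)).isOver = o := by
    have hp := List.findIdx_getElem (w := ha.passagePos_lt hi o)
    simp only [Bool.and_eq_true, beq_iff_eq] at hp
    exact hp
  have hs := ha.sgn_eq (List.getElem_mem (ha.passagePos_lt hi o))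
  rw [hp.1] at hs
  rw [Passage.inc, hp.2, hs]

end ValidK

lemma labelAt_succ (a : KCode) {k : ℕ} (hk : k < a.length) :
    labelAt a (k + 1) = labelAt a k + a[k].inc := by
  simp only [labelAt, List.take_add_one, List.getElem?_eq_getElem hk, Option.toList_some,
    List.map_append, List.sum_append, List.map_singleton, List.sum_singleton]

section ConnectedSum

variable {a b : KCode} {i : ℕ}

lemma labelAt_append_of_le {k : ℕ} (hk : k ≤ a.length) : labelAt (a ++ b) k = labelAt a k := by
  simp [labelAt, List.take_append_of_le_length hk]

lemma labelAt_append_add_length (k : ℕ) :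
    labelAt (a ++ b) (k + a.length) = labelAt a a.length + labelAt b k := by
  simp [labelAt, List.take_append, List.take_of_length_le]

lemma sgn_append_of_mem (hi : i ∈ crossIds a) : sgn (a ++ b) i = sgn a i := by
  obtain ⟨p, hp, rfl⟩ := mem_crossIds.mp hi
  have hfound : (a.find? fun q => q.id == p.id).isSome := List.find?_isSome.mpr ⟨p, hp, by simp⟩
  simp [sgn, List.find?_append, Option.or_of_isSome hfound]

lemma sgn_append_of_not_mem (hi : i ∉ crossIds a) : sgn (a ++ b) i = sgn b i := by
  have : a.find? (fun p => p.id == i) = none := by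
    simpa [mem_crossIds] using hi
  simp [sgn, this]

lemma passagePos_append_of_mem (ha : ValidK a) (hi : i ∈ crossIds a) (o : Bool) :
    passagePos (a ++ b) i o = passagePos a i o := by
  have hlt := ha.passagePos_lt hi o
  unfold passagePos at hlt ⊢
  rw [List.findIdx_append, if_pos hlt]

lemma passagePos_append_of_not_mem (hi : i ∉ crossIds a) (o : Bool) :
    passagePos (a ++ b) i o = passagePos b i o + a.length := by
  have hnone : a.findIdx (fun p => p.id == i && p.isOver == o) = a.length :=
    List.findIdx_eq_length_of_false fun p hp => by
      have : p.id ≠ i := fun h => hi (mem_crossIds.mpr ⟨p, hp, h⟩)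
      simp [this]
  unfold passagePos
  rw [List.findIdx_append, hnone, if_neg (lt_irrefl _)]

lemma wt_append_of_mem (ha : ValidK a) (hi : i ∈ crossIds a) : wt (a ++ b) i = wt a i := by
  simp only [wt_eq_passagePos, passagePos_append_of_mem ha hi, sgn_append_of_mem hi,
    labelAt_append_of_le (ha.passagePos_lt hi _).le]

lemma wt_append_of_not_mem (hi : i ∉ crossIds a) : wt (a ++ b) i = wt b i := by
  simp only [wt_eq_passagePos, passagePos_append_of_not_mem hi, sgn_append_of_not_mem hi,
    labelAt_append_add_length]
  ring

lemma crossIds_append_perm (hdisj : ∀ i ∈ crossIds a, i ∉ crossIds b) :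
    (crossIds (a ++ b)).Perm (crossIds a ++ crossIds b) := by
  refine (List.perm_ext_iff_of_nodup (List.nodup_dedup _) ?_).mpr fun i => ?_
  · exact List.nodup_append.mpr ⟨List.nodup_dedup _, List.nodup_dedup _,
      fun i hia j hjb hij => hdisj i hia (hij ▸ hjb)⟩
  · simp [mem_crossIds, List.mem_append]

theorem affP_append (ha : ValidK a) (hdisj : ∀ i ∈ crossIds a, i ∉ crossIds b) :
    affP (a ++ b) = affP a + affP b := by
  rw [affP, ((crossIds_append_perm hdisj).map _).sum_eq, List.map_append, List.sum_append]
  congr 1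
  · refine congrArg _ (List.map_congr_left fun i hi => ?_)
    rw [sgn_append_of_mem hi, wt_append_of_mem ha hi]
  · refine congrArg _ (List.map_congr_left fun i hi => ?_)
    have hia : i ∉ crossIds a := fun hia => hdisj i hia hi
    rw [sgn_append_of_not_mem hia, wt_append_of_not_mem hia]

end ConnectedSum

section VerticalMirror

variable {a : KCode} {i : ℕ}

lemma crossIds_vmirror_perm (a : KCode) : (crossIds (vmirror a)).Perm (crossIds a) := by
  simpa [crossIds, vmirror, List.map_reverse, Function.comp_def] using
    (List.reverse_perm (a.map Passage.id)).dedup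

lemma labelAt_vmirror (k : ℕ) :
    labelAt (vmirror a) k = labelAt a (a.length - k) - labelAt a a.length := by
  have hinc (p : Passage) : Passage.inc ⟨p.id, p.isOver, -p.sign⟩ = -p.inc := by
    simp only [Passage.inc]
    split_ifs <;> rfl
  have hdrop : labelAt (vmirror a) k = -((a.drop (a.length - k)).map Passage.inc).sum := by
    simp [labelAt, vmirror, List.take_reverse, List.map_reverse, List.sum_reverse,
      ← List.map_drop, Function.comp_def, hinc, List.sum_neg]
  have hsplit : labelAt a a.length =
      labelAt a (a.length - k) + ((a.drop (a.length - k)).map Passage.inc).sum := by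
    rw [labelAt, labelAt, List.take_length, ← List.sum_append, ← List.map_append,
      List.take_append_drop]
  rw [hdrop, hsplit]
  ring

lemma passagePos_vmirror (ha : ValidK a) (hi : i ∈ crossIds a) (o : Bool) :
    passagePos (vmirror a) i o = a.length - 1 - passagePos a i o := by
  have h : ((a.map fun p => (⟨p.id, p.isOver, -p.sign⟩ : Passage)).filter
      (fun p => p.id == i && p.isOver == o)).length = 1 := by
    rw [List.filter_map, List.length_map]
    exact ha.length_filter_passage hi o
  rw [passagePos, vmirror, List.findIdx_reverse_of_length_filter_eq_one h, List.findIdx_map,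
    List.length_map]
  rfl

lemma sgn_vmirror (ha : ValidK a) (hi : i ∈ crossIds a) : sgn (vmirror a) i = -sgn a i := by
  refine sgn_eq_of_forall_mem ((crossIds_vmirror_perm a).mem_iff.mpr hi) fun q hq hqi => ?_
  obtain ⟨p, hp, rfl⟩ : ∃ p ∈ a, (⟨p.id, p.isOver, -p.sign⟩ : Passage) = q := by
    simpa [vmirror] using hq
  rw [← hqi, ha.sgn_eq hp]

lemma wt_vmirror (ha : ValidK a) (hi : i ∈ crossIds a) : wt (vmirror a) i = wt a i := by
  have hlt := ha.passagePos_lt hi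
  have hlabel (o : Bool) : labelAt (vmirror a) (passagePos (vmirror a) i o) =
      labelAt a (passagePos a i o) + (a[passagePos a i o]'(hlt o)).inc - labelAt a a.length := by
    rw [passagePos_vmirror ha hi, labelAt_vmirror, ← labelAt_succ a (hlt o)]
    congr 2
    have := hlt o
    omega
  rw [wt_eq_passagePos, wt_eq_passagePos, hlabel, hlabel, ha.inc_getElem_passagePos hi,
    ha.inc_getElem_passagePos hi, sgn_vmirror ha hi]
  simp only [if_true, if_false, Bool.false_eq_true]
  ring

theorem affP_vmirror (ha : ValidK a) : affP (vmirror a) = -affP a := by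
  rw [affP, ((crossIds_vmirror_perm a).map _).sum_eq, affP, List.sum_neg, List.map_map]
  refine congrArg _ (List.map_congr_left fun i hi => ?_)
  simp [sgn_vmirror ha hi, wt_vmirror ha hi]

end VerticalMirror

section Relabel

variable {f : ℕ → ℕ} (hf : Function.Injective f) (a : KCode)

lemma vmirror_relabel : vmirror (relabel f a) = relabel f (vmirror a) := by
  simp [vmirror, relabel, List.map_reverse]

lemma labelAt_relabel (k : ℕ) : labelAt (relabel f a) k = labelAt a k := by
  simp only [labelAt, relabel, ← List.map_take, List.map_map]
  rfl

include hf

lemma crossIds_relabel : crossIds (relabel f a) = (crossIds a).map f := by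
  rw [crossIds, crossIds, ← List.dedup_map_of_injective hf, relabel, List.map_map, List.map_map]
  rfl

lemma sgn_relabel (i : ℕ) : sgn (relabel f a) (f i) = sgn a i := by
  simp [sgn, relabel, Function.comp_def, hf.beq_eq]

lemma passagePos_relabel (i : ℕ) (o : Bool) :
    passagePos (relabel f a) (f i) o = passagePos a i o := by
  simp [passagePos, relabel, List.findIdx_map, Function.comp_def, hf.beq_eq]

lemma wt_relabel (i : ℕ) : wt (relabel f a) (f i) = wt a i := by
  rw [wt_eq_passagePos, wt_eq_passagePos, passagePos_relabel hf, passagePos_relabel hf,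
    labelAt_relabel, labelAt_relabel, sgn_relabel hf]

theorem affP_relabel : affP (relabel f a) = affP a := by
  simp only [affP, crossIds_relabel hf, List.map_map, Function.comp_def, sgn_relabel hf,
    wt_relabel hf]

end Relabel

theorem affP_connected_sum_general (a b : KCode) (ha : ValidK a)
    (hdisj : ∀ i ∈ crossIds a, i ∉ crossIds b) :
    affP (a ++ b) = affP a + affP b ∧
      ∀ f : ℕ → ℕ, Function.Injective f →
        (∀ i ∈ crossIds a, ∀ j ∈ crossIds a, f i ≠ j) →
        affP (a ++ vmirror (relabel f a)) = 0 := by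
  refine ⟨affP_append ha hdisj, fun f hf hfa => ?_⟩
  rw [vmirror_relabel]
  have hdisj' : ∀ i ∈ crossIds a, i ∉ crossIds (relabel f (vmirror a)) := by
    intro i hi hi'
    obtain ⟨j, hj, rfl⟩ := List.mem_map.mp (crossIds_relabel hf _ ▸ hi')
    exact hfa j ((crossIds_vmirror_perm a).mem_iff.mp hj) _ hi rfl
  rw [affP_append ha hdisj', affP_relabel hf, affP_vmirror ha, add_neg_cancel]

/-- The affine index polynomial is additive under connected
sum: if `K # L` denotes a connected sum of virtual knot diagrams `K` and `L`
(obtained by removing an arc from each diagram and joining them — on Gauss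
codes, concatenation of codes with disjoint crossing names), then
`P_{K # L}(t) = P_K(t) + P_L(t)`; in particular, for any virtual knot diagram
`K`, `P_{K # K^!}(t) = P_K(t) - P_K(t) = 0`, where `K^!` is the vertical
mirror image of `K` (taken with freshly renamed crossings). -/
theorem affP_connected_sum (a b : KCode) (ha : ValidK a) (hb : ValidK b)
    (hdisj : ∀ i ∈ crossIds a, i ∉ crossIds b) :
    affP (a ++ b) = affP a + affP b ∧
      ∀ f : ℕ → ℕ, Function.Injective f →
        (∀ i ∈ crossIds a, ∀ j ∈ crossIds a, f i ≠ j) →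
        affP (a ++ vmirror (relabel f a)) = 0 :=
  affP_connected_sum_general a b ha hdisj
end

section
/- For a virtual knot diagram K, a classical crossing c is odd (it flanks an odd number of symbols in the Gauss code of K) if and only if its weight W_K(c) is odd; consequently the odd writhe satisfies J(K) = sum over crossings c with W_K(c) odd of sgn(c) = sum over odd n of wr_n(K), where wr_n(K) = sum over crossings c with W_K(c) = n of sgn(c). -/
/-!
# Virtual knots and links via signed Gauss codes

A virtual knot or link diagram, up to the virtual Reidemeister moves and the
detour move, is faithfully encoded by its signed oriented Gauss code: the
cyclic sequence, along each component, of passages through the classical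
crossings, each passage recording the crossing's name, whether the strand
passes over or under, and the crossing sign.  Virtual crossings and the
detour move are invisible in this encoding, so oriented virtual isotopy is
generated by the oriented classical Reidemeister moves together with
re-encoding moves (rotation of the base point, permutation of the components,
renaming of the crossings).
-/

open LaurentPolynomial

/-!
Every passage changes the affine label by `±1`, so the label entering the `k`-th
passage is congruent to `k` modulo 2.  Since the sign is odd as well, the weight of a
crossing is congruent to `overPos + underPos + 1`, which is odd exactly when the crossing
is odd.  Grouping the odd-weight crossings by their weight then gives `∑_{n odd} wr_n`.
-/

open Finset

theorem List.sum_modEq_length_of_forall_odd {l : List ℤ} (h : ∀ x ∈ l, Odd x) :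
    l.sum ≡ l.length [ZMOD 2] := by
  induction l with
  | nil => rfl
  | cons x t ih =>
    have hx := Int.odd_iff.1 (h x List.mem_cons_self)
    have ht := ih fun y hy => h y (List.mem_cons_of_mem x hy)
    simp only [List.sum_cons, List.length_cons, Int.ModEq] at ht ⊢
    omega

theorem List.Nodup.sum_map_filter {ι M : Type*} [DecidableEq ι] [AddCommMonoid M]
    {l : List ι} (hl : l.Nodup) (p : ι → Bool) (f : ι → M) :
    ((l.filter p).map f).sum = ∑ i ∈ l.toFinset with p i, f i := by
  rw [← List.sum_toFinset f (hl.filter p), List.toFinset_filter]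

theorem Finset.sum_filter_comp_eq_sum_ite_fiberwise {ι κ M : Type*} [DecidableEq κ]
    [AddCommMonoid M] {s : Finset ι} {t : Finset κ} {g : ι → κ} (hg : ∀ i ∈ s, g i ∈ t)
    (P : κ → Prop) [DecidablePred P] (f : ι → M) :
    ∑ i ∈ s with P (g i), f i =
      ∑ j ∈ t, if P j then ∑ i ∈ s with g i = j, f i else 0 := by
  rw [← sum_fiberwise_of_maps_to fun i hi => hg i (mem_filter.1 hi).1]
  refine sum_congr rfl fun j _ => ?_
  rw [filter_filter]
  split_ifs with hj
  · exact sum_congr (filter_congr fun i _ => by aesop) fun _ _ => rfl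
  · exact sum_eq_zero fun i hi => by
      obtain ⟨-, hPi, rfl⟩ := mem_filter.1 hi
      exact absurd hPi hj

theorem Passage.odd_inc {p : Passage} (hp : p.sign = 1 ∨ p.sign = -1) : Odd p.inc := by
  unfold Passage.inc
  rcases hp with h | h <;> split <;> simp [h]

theorem labelAt_modEq {a : KCode} (h : ∀ p ∈ a, Odd p.inc) {k : ℕ} (hk : k ≤ a.length) :
    labelAt a k ≡ k [ZMOD 2] := by
  have hodd : ∀ x ∈ (a.take k).map Passage.inc, Odd x := by
    simp only [List.mem_map]
    rintro _ ⟨p, hp, rfl⟩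
    exact h p (List.mem_of_mem_take hp)
  have := List.sum_modEq_length_of_forall_odd hodd
  rwa [List.length_map, List.length_take, Nat.min_eq_left hk] at this

theorem nodup_crossIds (a : KCode) : (crossIds a).Nodup := List.nodup_dedup _

theorem wrn_eq_sum (a : KCode) (n : ℤ) :
    wrn a n = ∑ i ∈ (crossIds a).toFinset with wt a i = n, sgn a i := by
  simp only [wrn, (nodup_crossIds a).sum_map_filter, beq_iff_eq]

namespace ValidK

theorem odd_inc {a : KCode} (ha : ValidK a) : ∀ p ∈ a, Odd p.inc :=
  fun p hp => Passage.odd_inc (ha p hp).1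

theorem odd_sgn {a : KCode} (ha : ValidK a) {i : ℕ} (hi : i ∈ crossIds a) :
    Odd (sgn a i) := by
  obtain ⟨p, hp, rfl⟩ : ∃ p ∈ a, p.id = i := by simpa [crossIds] using hi
  obtain ⟨q, hq⟩ : ∃ q, a.find? (fun r => r.id == p.id) = some q :=
    Option.isSome_iff_exists.1 (List.find?_isSome.2 ⟨p, hp, by simp⟩)
  rw [sgn, hq]
  rcases (ha q (List.mem_of_find?_eq_some hq)).1 with h | h <;> simp [h]

theorem oddCross_iff_odd_wt {a : KCode} (ha : ValidK a) {i : ℕ} (hi : i ∈ crossIds a) :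
    OddCross a i = true ↔ Odd (wt a i) := by
  have hover := labelAt_modEq ha.odd_inc (k := overPos a i) List.findIdx_le_length
  have hunder := labelAt_modEq ha.odd_inc (k := underPos a i) List.findIdx_le_length
  have hsgn := Int.odd_iff.1 (ha.odd_sgn hi)
  rw [Int.ModEq] at hover hunder
  rw [OddCross, wt, beq_iff_eq, Int.odd_iff]
  omega

theorem oddWrithe_eq_sum_filter_odd_wt {a : KCode} (ha : ValidK a) :
    oddWrithe a = (((crossIds a).filter (fun i => decide (Odd (wt a i)))).map (sgn a)).sum := by
  rw [oddWrithe, List.filter_congr fun i hi =>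
    Bool.eq_iff_iff.2 ((ha.oddCross_iff_odd_wt hi).trans decide_eq_true_iff.symm)]

end ValidK

/-- For a virtual knot diagram `K`, a classical crossing `c`
is odd (it flanks an odd number of symbols in the Gauss code of `K`) if and
only if its weight `W_K(c)` is odd; consequently the odd writhe satisfies
`J(K) = ∑_{c : W_K(c) odd} sgn(c) = ∑_{n odd} wr_n(K)`, where
`wr_n(K) = ∑_{c : W_K(c) = n} sgn(c)`. -/
theorem odd_writhe_eq_sum_odd_wrn (a : KCode) (ha : ValidK a) :
    (∀ i ∈ crossIds a, OddCross a i = true ↔ Odd (wt a i)) ∧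
    oddWrithe a
      = (((crossIds a).filter (fun i => decide (Odd (wt a i)))).map (sgn a)).sum ∧
    ∀ S : Finset ℤ, (∀ i ∈ crossIds a, wt a i ∈ S) →
      oddWrithe a = ∑ n ∈ S, if Odd n then wrn a n else 0 := by
  refine ⟨fun i hi => ha.oddCross_iff_odd_wt hi, ha.oddWrithe_eq_sum_filter_odd_wt,
    fun S hS => ?_⟩
  have hmaps : ∀ i ∈ (crossIds a).toFinset, wt a i ∈ S :=
    fun i hi => hS i (List.mem_toFinset.1 hi)
  simp only [ha.oddWrithe_eq_sum_filter_odd_wt, (nodup_crossIds a).sum_map_filter,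
    decide_eq_true_eq, wrn_eq_sum]
  exact sum_filter_comp_eq_sum_ite_fiberwise hmaps Odd (sgn a)
end
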